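/- The identity is the unique permutation of degree zero, and every non-identity permutation has degree at least 2: with the peak/valley/slope/ladder classification, deg(id_n) = 0, and for any π ∈ S_n with π ≠ id, deg(π) ≥ 2. -/

import Mathlib

/-!
If `π ≠ id`, the extended sequence `π̃(0), …, π̃(n+1)` starts at its minimum and ends at its
maximum but has a descent. At the top of its first descent `π̃` has a valley, at the bottom of
its last descent a peak; neither is a ladder, and they lie at distinct indices, so at most `n - 2`
indices are ladders. For the identity every index is a ladder.
-/

/-- The extension `π̃` of a permutation `π` of `{1,…,n}` to `{0,1,…,n+1}` fixing `0`
and `n+1`. -/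
def permExt (n : ℕ) (π : Equiv.Perm (Fin n)) : ℕ → ℕ := fun k =>
  if h : 1 ≤ k ∧ k ≤ n then (π ⟨k - 1, by omega⟩).val + 1 else k

/-- `(j, π(j))` is a peak: `π(j) < min{π̃(j−1), π̃(j+1)}`
(here `j : Fin n` represents the index `j+1 ∈ {1,…,n}`). -/
def IsPeak (n : ℕ) (π : Equiv.Perm (Fin n)) (j : Fin n) : Prop :=
  permExt n π (j.val + 1) < min (permExt n π j.val) (permExt n π (j.val + 2))

/-- `(j, π(j))` is a valley: `π(j) > max{π̃(j−1), π̃(j+1)}`. -/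
def IsValley (n : ℕ) (π : Equiv.Perm (Fin n)) (j : Fin n) : Prop :=
  max (permExt n π j.val) (permExt n π (j.val + 2)) < permExt n π (j.val + 1)

/-- `(j, π(j))` is a ladder: `π(j) − 1 ∈ {π̃(j−1), π̃(j+1)}` and it is not a valley. -/
def IsLadder (n : ℕ) (π : Equiv.Perm (Fin n)) (j : Fin n) : Prop :=
  (permExt n π (j.val + 1) = permExt n π j.val + 1 ∨
    permExt n π (j.val + 1) = permExt n π (j.val + 2) + 1) ∧ ¬ IsValley n π j

/-- `(j, π(j))` is a slope: neither a peak, a valley, nor a ladder. -/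
def IsSlope (n : ℕ) (π : Equiv.Perm (Fin n)) (j : Fin n) : Prop :=
  ¬ IsPeak n π j ∧ ¬ IsValley n π j ∧ ¬ IsLadder n π j

instance (n : ℕ) (π : Equiv.Perm (Fin n)) : DecidablePred (IsPeak n π) :=
  fun _ => inferInstanceAs (Decidable (_ < _))

instance (n : ℕ) (π : Equiv.Perm (Fin n)) : DecidablePred (IsValley n π) :=
  fun _ => inferInstanceAs (Decidable (_ < _))

instance (n : ℕ) (π : Equiv.Perm (Fin n)) : DecidablePred (IsLadder n π) :=
  fun _ => inferInstanceAs (Decidable (_ ∧ _))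

instance (n : ℕ) (π : Equiv.Perm (Fin n)) : DecidablePred (IsSlope n π) :=
  fun _ => inferInstanceAs (Decidable (_ ∧ _))

/-- The degree of a permutation: `deg(π) = n − ℓ(π)` where `ℓ(π)` is the number of
ladder indices. -/
def permDeg (n : ℕ) (π : Equiv.Perm (Fin n)) : ℕ :=
  n - (Finset.univ.filter fun j : Fin n => IsLadder n π j).card

open Function

section Descents

variable {α : Type*} [LinearOrder α] {f : ℕ → α}

theorem exists_valley_before_descent (hf : Injective f) (h₀ : f 0 ≤ f 1) {p : ℕ}
    (hp : f (p + 1) < f p) : ∃ m < p, f m < f (m + 1) ∧ f (m + 2) < f (m + 1) := by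
  classical
  have hex : ∃ q, f (q + 1) < f q := ⟨p, hp⟩
  set q := Nat.find hex
  have hq : f (q + 1) < f q := Nat.find_spec hex
  have hqp : q ≤ p := Nat.find_min' hex hp
  obtain ⟨m, hm⟩ : ∃ m, q = m + 1 := Nat.exists_eq_succ_of_ne_zero fun h => by
    rw [h] at hq; exact absurd hq h₀.not_gt
  have hasc : f m ≤ f (m + 1) := not_lt.1 (Nat.find_min hex (show m < q by omega))
  rw [hm] at hq
  exact ⟨m, by omega, hasc.lt_of_ne (hf.ne (by omega)), hq⟩

theorem exists_peak_after_descent (hf : Injective f) {N p : ℕ} (hN : f N ≤ f (N + 1))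
    (hpN : p ≤ N) (hp : f (p + 1) < f p) :
    ∃ m, p ≤ m ∧ m < N ∧ f (m + 1) < f m ∧ f (m + 1) < f (m + 2) := by
  classical
  set P : ℕ → Prop := fun q => f (q + 1) < f q
  set M := Nat.findGreatest P N
  have hM : f (M + 1) < f M := Nat.findGreatest_spec (P := P) hpN hp
  have hpM : p ≤ M := Nat.le_findGreatest (P := P) hpN hp
  have hMN : M < N := (Nat.findGreatest_le N).lt_of_ne fun h => by
    rw [show M = N from h] at hM; exact absurd hM hN.not_gt
  have hasc : f (M + 1) ≤ f (M + 2) :=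
    not_lt.1 (Nat.findGreatest_is_greatest (P := P) (Nat.lt_succ_self M) hMN)
  exact ⟨M, hpM, hMN, hM, hasc.lt_of_ne (hf.ne (by omega))⟩

end Descents

section PermExt

variable {n : ℕ} (π : Equiv.Perm (Fin n))

theorem permExt_succ (j : Fin n) : permExt n π (j + 1) = π j + 1 := by
  simp [permExt]

theorem permExt_top : permExt n π (n + 1) = n + 1 := by
  simp [permExt]

theorem permExt_le {k : ℕ} (hk : k ≤ n) : permExt n π k ≤ n := by
  unfold permExt
  split
  · have := (π ⟨k - 1, by omega⟩).isLt; omega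
  · exact hk

theorem permExt_injective : Injective (permExt n π) := by
  intro k l h
  unfold permExt at h
  split at h <;> split at h
  · have := π.injective (Fin.ext (Nat.succ_injective h))
    simp only [Fin.mk.injEq] at this
    omega
  · have := (π ⟨k - 1, by omega⟩).isLt; omega
  · have := (π ⟨l - 1, by omega⟩).isLt; omega
  · exact h

theorem permExt_one : permExt n 1 = id := by
  funext k
  unfold permExt
  split
  · simp only [Equiv.Perm.coe_one, id_eq]; omega
  · rfl

variable {π}

theorem exists_permExt_descent_of_ne_one (hπ : π ≠ 1) :
    ∃ p < n, permExt n π (p + 1) < permExt n π p := by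
  by_contra! hasc
  obtain _ | n := n
  · exact hπ (Subsingleton.elim _ _)
  have hmono : Monotone π := Fin.monotone_iff_le_succ.2 fun i => by
    have := hasc (i.castSucc + 1) (by simp)
    rw [permExt_succ, show (i.castSucc : ℕ) + 1 + 1 = i.succ + 1 by simp, permExt_succ] at this
    exact Fin.le_iff_val_le_val.2 (by omega)
  exact hπ (Equiv.ext fun i =>
    congrFun ((hmono.strictMono_of_injective π.injective).eq_id) i)

end PermExt

variable {n : ℕ} {π : Equiv.Perm (Fin n)} {j : Fin n}

theorem isLadder_one (j : Fin n) : IsLadder n 1 j := by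
  refine ⟨Or.inl (by simp [permExt_one]), fun hv => ?_⟩
  simp only [IsValley, permExt_one, id_eq] at hv
  omega

theorem permDeg_one (n : ℕ) : permDeg n 1 = 0 := by
  simp [permDeg, isLadder_one]

theorem IsValley.not_isLadder (h : IsValley n π j) : ¬ IsLadder n π j :=
  fun hl => hl.2 h

theorem IsPeak.not_isLadder (h : IsPeak n π j) : ¬ IsLadder n π j := by
  rintro ⟨hl | hl, -⟩ <;> simp only [IsPeak, lt_min_iff] at h <;> omega

theorem two_le_permDeg_of_ne {i j : Fin n} (hij : i ≠ j) (hi : ¬ IsLadder n π i)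
    (hj : ¬ IsLadder n π j) : 2 ≤ permDeg n π := by
  set L := Finset.univ.filter fun k : Fin n => IsLadder n π k
  have hdisj : Disjoint L {i, j} := by
    simp [L, Finset.disjoint_insert_right, hi, hj]
  have hcard : L.card + 2 ≤ n := by
    calc L.card + 2 = (L ∪ {i, j}).card := by
          rw [Finset.card_union_of_disjoint hdisj, Finset.card_pair hij]
      _ ≤ n := by simpa using Finset.card_le_univ (L ∪ {i, j})
  show 2 ≤ n - L.card
  omega

/-- The identity is the unique permutation of degree zero, and every non-identity
permutation has degree at least `2`. -/
theorem degree_zero_iff_id (n : ℕ) :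
    permDeg n 1 = 0 ∧ ∀ π : Equiv.Perm (Fin n), π ≠ 1 → 2 ≤ permDeg n π := by
  refine ⟨permDeg_one n, fun π hπ => ?_⟩
  obtain ⟨p, hpn, hp⟩ := exists_permExt_descent_of_ne_one hπ
  have hf := permExt_injective π
  obtain ⟨v, hvp, hv⟩ := exists_valley_before_descent hf (Nat.zero_le _) hp
  obtain ⟨k, hpk, hkn, hk⟩ := exists_peak_after_descent hf
    (by rw [permExt_top]; exact (permExt_le π le_rfl).trans n.le_succ) hpn.le hp
  have hvalley : IsValley n π ⟨v, by omega⟩ := max_lt hv.1 hv.2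
  have hpeak : IsPeak n π ⟨k, hkn⟩ := lt_min hk.1 hk.2
  exact two_le_permDeg_of_ne (by simp only [ne_eq, Fin.mk.injEq]; omega)
    hvalley.not_isLadder hpeak.not_isLadder
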